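/- arXiv:0704.3565 — 15 statements merged into one kernel-verified Lean document; each statement's English description precedes it below -/
import Mathlib

section
/- If a permutation π of {1,...,n} contains an occurrence of the generalized pattern 21-3 (i.e., there exist indices i and k with i+1 < k such that π(i+1) < π(i) < π(k)), then π also contains an occurrence of the generalized pattern 2-13 (i.e., there exist indices i < j with j+1 ≤ n such that π(j) < π(i) < π(j+1)). -/
/-!
Let `π(i+1) < π(i) < π(k)` with `i + 1 < k`. Walking from position `i + 1` to `k`, the values of `π`
cross the level `π(i)` upwards at some adjacent pair `j, j + 1`: `π(j) < π(i) ≤ π(j + 1)`.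
Injectivity makes the second inequality strict, since `j + 1 > i`, and `π(i), π(j), π(j + 1)`
is an occurrence of `2-13`.
-/

theorem Nat.exists_lt_le_succ_of_lt_of_le {α : Type*} [LinearOrder α] (f : ℕ → α) {c : α}
    {a b : ℕ} (hab : a ≤ b) (ha : f a < c) (hb : c ≤ f b) :
    ∃ j, a ≤ j ∧ j < b ∧ f j < c ∧ c ≤ f (j + 1) := by
  induction b, hab using Nat.le_induction with
  | base => exact absurd hb (not_le.mpr ha)
  | succ b hab ih =>
    rcases lt_or_ge (f b) c with hlt | hge
    · exact ⟨b, hab, b.lt_succ_self, hlt, hb⟩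
    · obtain ⟨j, haj, hjb, hj, hj1⟩ := ih hge
      exact ⟨j, haj, hjb.trans b.lt_succ_self, hj, hj1⟩

theorem stmt_0 (n : ℕ) (π : ℕ → ℕ)
    (hπ : Set.BijOn π (Set.Icc 1 n) (Set.Icc 1 n))
    (h : ∃ i k : ℕ, 1 ≤ i ∧ i + 1 < k ∧ k ≤ n ∧ π (i+1) < π i ∧ π i < π k) :
    ∃ i j : ℕ, 1 ≤ i ∧ i < j ∧ j + 1 ≤ n ∧ π j < π i ∧ π i < π (j+1) := by
  obtain ⟨i, k, hi, hik, hkn, hdescent, hascent⟩ := h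
  obtain ⟨j, hij, hjk, hj, hj1⟩ :=
    Nat.exists_lt_le_succ_of_lt_of_le π hik.le hdescent hascent.le
  have hne : π i ≠ π (j + 1) := fun heq =>
    absurd (hπ.injOn ⟨hi, by omega⟩ ⟨by omega, by omega⟩ heq) (by omega)
  exact ⟨i, j, hi, by omega, by omega, hj, lt_of_le_of_ne hj1 hne⟩
end

section
/- If a permutation π of {1,...,n} contains an occurrence of the generalized pattern 23-1 (indices i, k with i+1 < k and π(k) < π(i) < π(i+1)), then π contains an occurrence of the generalized pattern 2-31 (indices i < j with j+1 ≤ n and π(j+1) < π(i) < π(j)). -/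
/-!
Take the 23-1 occurrence `π k < π i < π (i+1)`. Walking from position `i + 1` to `k`, the values
start above `π i` and end below it, so some adjacent pair `j, j + 1` steps across `π i`:
`π (j + 1) < π i ≤ π j`. Since `j ≠ i`, injectivity makes the second inequality strict, and
`i, j, j + 1` is an occurrence of 2-31.
-/

theorem exists_step_below {α : Type*} [LinearOrder α] (f : ℕ → α) {c : α} {a b : ℕ}
    (hab : a ≤ b) (ha : c ≤ f a) (hb : f b < c) :
    ∃ j, a ≤ j ∧ j < b ∧ c ≤ f j ∧ f (j + 1) < c := by
  induction b, hab using Nat.le_induction with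
  | base => exact absurd ha (not_le.mpr hb)
  | succ b hab ih =>
    by_cases hcb : c ≤ f b
    · exact ⟨b, hab, b.lt_succ_self, hcb, hb⟩
    · obtain ⟨j, haj, hjb, hcj, hj⟩ := ih (not_le.mp hcb)
      exact ⟨j, haj, hjb.trans b.lt_succ_self, hcj, hj⟩

theorem stmt_1 (n : ℕ) (π : ℕ → ℕ)
    (hπ : Set.BijOn π (Set.Icc 1 n) (Set.Icc 1 n))
    (h : ∃ i k : ℕ, 1 ≤ i ∧ i + 1 < k ∧ k ≤ n ∧ π k < π i ∧ π i < π (i+1)) :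
    ∃ i j : ℕ, 1 ≤ i ∧ i < j ∧ j + 1 ≤ n ∧ π (j+1) < π i ∧ π i < π j := by
  obtain ⟨i, k, hi, hik, hkn, hki, hii⟩ := h
  obtain ⟨j, hij, hjk, hij_le, hj⟩ := exists_step_below π hik.le hii.le hki
  have hne : π i ≠ π j := fun heq => by
    have := hπ.injOn (⟨hi, by omega⟩ : i ∈ Set.Icc 1 n) (⟨by omega, by omega⟩ : j ∈ Set.Icc 1 n) heq
    omega
  exact ⟨i, j, hi, by omega, by omega, hj, lt_of_le_of_ne hij_le hne⟩
end

section
/- If a permutation π of {1,...,n} contains an occurrence of the generalized pattern 1-32 (indices i < j with j+1 ≤ n and π(i) < π(j+1) < π(j)), then π contains an occurrence of the generalized pattern 13-2 (indices i, k with i+1 < k and π(i) < π(k) < π(i+1)). -/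
/-! Given an occurrence `π i < π (j+1) < π j` of `1-32`, walk from `i` towards `j` and stop at the
last position `a` with `π a < π (j+1)`. Then `π (j+1) ≤ π (a+1)`, and injectivity makes this strict
because `a + 1 ≤ j`, so `(a, j+1)` is an occurrence of `13-2`. -/

lemma Nat.exists_boundary_of_lt (P : ℕ → Prop) {i j : ℕ} (hij : i < j) (hi : P i) (hj : ¬ P j) :
    ∃ a, i ≤ a ∧ a < j ∧ P a ∧ ¬ P (a + 1) := by
  classical
  set a := Nat.findGreatest P j
  have ha : P a := Nat.findGreatest_spec hij.le hi
  have haj : a < j := lt_of_le_of_ne (Nat.findGreatest_le j) fun h => hj (h ▸ ha)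
  exact ⟨a, Nat.le_findGreatest hij.le hi, haj, ha,
    Nat.findGreatest_is_greatest (Nat.lt_succ_self a) haj⟩

theorem stmt_2 (n : ℕ) (π : ℕ → ℕ)
    (hπ : Set.BijOn π (Set.Icc 1 n) (Set.Icc 1 n))
    (h : ∃ i j : ℕ, 1 ≤ i ∧ i < j ∧ j + 1 ≤ n ∧ π i < π (j+1) ∧ π (j+1) < π j) :
    ∃ i k : ℕ, 1 ≤ i ∧ i + 1 < k ∧ k ≤ n ∧ π i < π k ∧ π k < π (i+1) := by
  obtain ⟨i, j, hi, hij, hjn, h_low, h_high⟩ := h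
  obtain ⟨a, hia, haj, ha, ha_succ⟩ :=
    Nat.exists_boundary_of_lt (fun a => π a < π (j+1)) hij h_low h_high.asymm
  have hne : π (a+1) ≠ π (j+1) := fun heq =>
    absurd (hπ.injOn ⟨by omega, by omega⟩ ⟨by omega, hjn⟩ heq) (by omega)
  exact ⟨a, j+1, by omega, by omega, hjn, ha, lt_of_le_of_ne (not_lt.mp ha_succ) hne.symm⟩
end

section
/- If a permutation π of {1,...,n} contains an occurrence of the generalized pattern 3-12 (indices i < j with j+1 ≤ n and π(j) < π(j+1) < π(i)), then π contains an occurrence of the generalized pattern 31-2 (indices i, k with i+1 < k and π(i+1) < π(k) < π(i)). -/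
/-! On the positions from `i` to `j`, `π` starts at or above `π (j + 1)` and ends below it, so there
is a position `p` with `π (p + 1) < π (j + 1) ≤ π p`; injectivity makes the second inequality
strict, and `π p, π (p + 1), π (j + 1)` is an occurrence of `31-2`. -/

theorem Nat.exists_le_lt_and_not_succ {P : ℕ → Prop} {a b : ℕ} (hab : a ≤ b) (ha : P a)
    (hb : ¬ P b) : ∃ p, a ≤ p ∧ p < b ∧ P p ∧ ¬ P (p + 1) := by
  induction b, hab using Nat.le_induction with
  | base => exact absurd ha hb
  | succ b hab ih =>
    by_cases hPb : P b
    · exact ⟨b, hab, b.lt_succ_self, hPb, hb⟩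
    · obtain ⟨p, hap, hpb, hPp, hPp'⟩ := ih hPb
      exact ⟨p, hap, hpb.trans b.lt_succ_self, hPp, hPp'⟩

theorem stmt_3 (n : ℕ) (π : ℕ → ℕ)
    (hπ : Set.BijOn π (Set.Icc 1 n) (Set.Icc 1 n))
    (h : ∃ i j : ℕ, 1 ≤ i ∧ i < j ∧ j + 1 ≤ n ∧ π j < π (j+1) ∧ π (j+1) < π i) :
    ∃ i k : ℕ, 1 ≤ i ∧ i + 1 < k ∧ k ≤ n ∧ π (i+1) < π k ∧ π k < π i := by
  obtain ⟨i, j, hi, hij, hjn, hj, hji⟩ := h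
  obtain ⟨p, hip, hpj, hp, hp'⟩ :=
    Nat.exists_le_lt_and_not_succ (P := fun q ↦ π (j + 1) ≤ π q) hij.le hji.le (not_le.mpr hj)
  have hne : π p ≠ π (j + 1) := fun heq ↦
    absurd (hπ.injOn ⟨by omega, by omega⟩ ⟨by omega, hjn⟩ heq) (by omega)
  exact ⟨p, j + 1, by omega, by omega, hjn, not_le.mp hp', lt_of_le_of_ne hp hne.symm⟩
end

section
/- If a permutation π of {1,...,n} avoids both generalized patterns 1-23 (no i < j with π(i) < π(j) < π(j+1)) and 2-13 (no i < j with π(j) < π(i) < π(j+1)), then π also avoids the pattern 12-3 (no i and k with i+1 < k and π(i) < π(i+1) < π(k)). -/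
/-! Given `π i < π (i+1) < π k`, walk right from `i + 1` while the values stay below `π k`;
this stops at some `j < k` with `π j < π k ≤ π (j+1)`. The adjacent pair `π j, π (j+1)` then
lies entirely above `π i` or straddles it (`π j = π i` is excluded by injectivity), giving an
occurrence of `1-23` or of `2-13`. -/

theorem exists_lt_le_succ_of_lt {α : Type*} [LinearOrder α] (f : ℕ → α) {a k : ℕ}
    (hak : a < k) (ha : f a < f k) : ∃ j, a ≤ j ∧ j < k ∧ f j < f k ∧ f k ≤ f (j + 1) := by
  induction hd : k - a generalizing a with
  | zero => omega
  | succ d ih =>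
    by_cases hnext : f k ≤ f (a + 1)
    · exact ⟨a, le_rfl, hak, ha, hnext⟩
    · rw [not_le] at hnext
      have hak' : a + 1 < k :=
        lt_of_le_of_ne hak fun h => (lt_irrefl (f k)) (h ▸ hnext)
      obtain ⟨j, haj, hjk, hfj, hfk⟩ := ih hak' hnext (by omega)
      exact ⟨j, by omega, hjk, hfj, hfk⟩

theorem stmt_4 (n : ℕ) (π : ℕ → ℕ)
    (hπ : Set.BijOn π (Set.Icc 1 n) (Set.Icc 1 n))
    (h1 : ¬ (∃ i j : ℕ, 1 ≤ i ∧ i < j ∧ j + 1 ≤ n ∧ π i < π j ∧ π j < π (j+1))) (h2 : ¬ (∃ i j : ℕ, 1 ≤ i ∧ i < j ∧ j + 1 ≤ n ∧ π j < π i ∧ π i < π (j+1))) :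
    ¬ (∃ i k : ℕ, 1 ≤ i ∧ i + 1 < k ∧ k ≤ n ∧ π i < π (i+1) ∧ π (i+1) < π k) := by
  rintro ⟨i, k, hi, hik, hkn, hab, hbc⟩
  obtain ⟨j, hij, hjk, hfj, hfk⟩ := exists_lt_le_succ_of_lt π hik hbc
  rcases lt_trichotomy (π i) (π j) with h | h | h
  · exact h1 ⟨i, j, hi, by omega, by omega, h, hfj.trans_le hfk⟩
  · exact absurd (hπ.injOn ⟨hi, by omega⟩ ⟨by omega, by omega⟩ h) (by omega)
  · exact h2 ⟨i, j, hi, by omega, by omega, h, (hab.trans hbc).trans_le hfk⟩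
end

section
/- If a permutation π of {1,...,n} avoids both generalized patterns 1-23 (no i < j with π(i) < π(j) < π(j+1)) and 21-3 (no i, k with i+1 < k and π(i+1) < π(i) < π(k)), then π avoids the pattern 12-3 (no i, k with i+1 < k and π(i) < π(i+1) < π(k)). -/
/-! Let `π i < π (i+1) < π k` be an occurrence of 12-3. Avoiding 1-23 (with `j = i+1`) forces a
descent `π (i+2) < π (i+1)`, so `k ≠ i+2`, and then `π (i+2) < π (i+1) < π k` is an occurrence
of 21-3. -/

theorem stmt_5 (n : ℕ) (π : ℕ → ℕ)
    (hπ : Set.BijOn π (Set.Icc 1 n) (Set.Icc 1 n))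
    (h1 : ¬ (∃ i j : ℕ, 1 ≤ i ∧ i < j ∧ j + 1 ≤ n ∧ π i < π j ∧ π j < π (j+1))) (h2 : ¬ (∃ i k : ℕ, 1 ≤ i ∧ i + 1 < k ∧ k ≤ n ∧ π (i+1) < π i ∧ π i < π k)) :
    ¬ (∃ i k : ℕ, 1 ≤ i ∧ i + 1 < k ∧ k ≤ n ∧ π i < π (i+1) ∧ π (i+1) < π k) := by
  rintro ⟨i, k, hi, hik, hkn, hrise, hlarge⟩
  have hle : π (i + 2) ≤ π (i + 1) :=
    not_lt.mp fun h ↦ h1 ⟨i, i + 1, hi, i.lt_succ_self, by omega, hrise, h⟩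
  have hne : π (i + 1) ≠ π (i + 2) := fun h ↦ by
    have := hπ.injOn ⟨by omega, by omega⟩ ⟨by omega, by omega⟩ h
    omega
  have hdescent : π (i + 2) < π (i + 1) := hle.lt_of_ne hne.symm
  obtain rfl | hk : k = i + 2 ∨ i + 2 < k := by omega
  · exact lt_asymm hdescent hlarge
  · exact h2 ⟨i + 1, k, by omega, hk, hkn, hdescent, hlarge⟩
end

section
/- If a permutation π of {1,...,n} avoids both generalized patterns 1-23 (no i < j with π(i) < π(j) < π(j+1)) and 2-31 (no i < j with π(j+1) < π(i) < π(j)), then π avoids the pattern 12-3 (no i, k with i+1 < k and π(i) < π(i+1) < π(k)). -/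
/-!
Suppose `π i < π (i+1) < π k` with `i + 1 < k`. Since `π (i+1) < π k`, the segment from `i+1` to `k`
has an ascent `π m < π (m+1)`. If `π i < π m`, then `(i, m)` is an occurrence of `1-23`. Otherwise
`π m < π i < π (i+1)`, so between `i+1` and `m` the values cross downwards past `π i`, and that descent
together with `i` is an occurrence of `2-31`.
-/

namespace Nat

theorem exists_le_lt_and_not_succ_s6 {P : ℕ → Prop} {a b : ℕ} (hab : a ≤ b) (ha : P a) (hb : ¬ P b) :
    ∃ l, a ≤ l ∧ l < b ∧ P l ∧ ¬ P (l + 1) := by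
  induction b, hab using Nat.le_induction with
  | base => exact absurd ha hb
  | succ b hab ih =>
    by_cases hPb : P b
    · exact ⟨b, hab, b.lt_succ_self, hPb, hb⟩
    · obtain ⟨l, hal, hlb, hl⟩ := ih hPb
      exact ⟨l, hal, hlb.trans b.lt_succ_self, hl⟩

variable {α : Type*} [LinearOrder α] {f : ℕ → α} {a b : ℕ}

theorem exists_lt_succ_of_lt (hab : a ≤ b) (h : f a < f b) :
    ∃ m, a ≤ m ∧ m < b ∧ f m < f (m + 1) := by
  obtain ⟨m, ham, hmb, hm, hm1⟩ :=
    exists_le_lt_and_not_succ_s6 (P := fun l => f l ≤ f a) hab le_rfl h.not_ge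
  exact ⟨m, ham, hmb, hm.trans_lt (not_le.mp hm1)⟩

theorem exists_lt_and_succ_le_of_lt_of_le {c : α} (hab : a ≤ b) (ha : c < f a) (hb : f b ≤ c) :
    ∃ l, a ≤ l ∧ l < b ∧ c < f l ∧ f (l + 1) ≤ c := by
  obtain ⟨l, hal, hlb, hl, hl1⟩ :=
    exists_le_lt_and_not_succ_s6 (P := fun l => c < f l) hab ha hb.not_gt
  exact ⟨l, hal, hlb, hl, not_lt.mp hl1⟩

end Nat

theorem stmt_6 (n : ℕ) (π : ℕ → ℕ)
    (hπ : Set.BijOn π (Set.Icc 1 n) (Set.Icc 1 n))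
    (h1 : ¬ (∃ i j : ℕ, 1 ≤ i ∧ i < j ∧ j + 1 ≤ n ∧ π i < π j ∧ π j < π (j+1))) (h2 : ¬ (∃ i j : ℕ, 1 ≤ i ∧ i < j ∧ j + 1 ≤ n ∧ π (j+1) < π i ∧ π i < π j)) :
    ¬ (∃ i k : ℕ, 1 ≤ i ∧ i + 1 < k ∧ k ≤ n ∧ π i < π (i+1) ∧ π (i+1) < π k) := by
  rintro ⟨i, k, hi, hik, hkn, hrise, hk⟩
  have hne : ∀ j, i < j → j ≤ n → π j ≠ π i := fun j hij hjn =>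
    hπ.injOn.ne ⟨by omega, hjn⟩ ⟨hi, by omega⟩ hij.ne'
  obtain ⟨m, him, hmk, hasc⟩ := Nat.exists_lt_succ_of_lt (f := π) hik.le hk
  rcases (hne m (by omega) (by omega)).lt_or_gt with hlow | hhigh
  · obtain ⟨l, hil, hlm, hl, hl1⟩ :=
      Nat.exists_lt_and_succ_le_of_lt_of_le (f := π) him hrise hlow.le
    exact h2 ⟨i, l, hi, by omega, by omega, hl1.lt_of_ne (hne (l + 1) (by omega) (by omega)), hl⟩
  · exact h1 ⟨i, m, hi, by omega, by omega, hhigh, hasc⟩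
end

section
/- If a permutation π of {1,...,n} avoids both generalized patterns 1-23 (no i < j with π(i) < π(j) < π(j+1)) and 23-1 (no i, k with i+1 < k and π(k) < π(i) < π(i+1)), then π avoids the pattern 12-3 (no i, k with i+1 < k and π(i) < π(i+1) < π(k)). -/
/- Given an occurrence `π i < π (i+1) < π k` of 12-3, some step `j → j+1` with `i+1 ≤ j < k`
crosses the level `π (i+1)` upward. Depending on whether `π j` lies above or below `π i`,
`(i, j, j+1)` is an occurrence of 1-23 or `(i, i+1, j)` one of 23-1. -/

theorem Nat.exists_upcrossing_step {α : Type*} [LinearOrder α] (f : ℕ → α) {a b : ℕ}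
    (hab : a < b) (h : f a < f b) : ∃ j, a ≤ j ∧ j < b ∧ f j ≤ f a ∧ f a < f (j + 1) := by
  induction b, hab using Nat.le_induction with
  | base => exact ⟨a, le_rfl, Nat.lt_succ_self a, le_rfl, h⟩
  | succ b hab ih =>
    by_cases hb : f a < f b
    · obtain ⟨j, haj, hjb, hj⟩ := ih hb
      exact ⟨j, haj, hjb.trans (Nat.lt_succ_self b), hj⟩
    · exact ⟨b, Nat.le_of_succ_le hab, Nat.lt_succ_self b, not_lt.mp hb, h⟩

theorem stmt_7 (n : ℕ) (π : ℕ → ℕ)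
    (hπ : Set.BijOn π (Set.Icc 1 n) (Set.Icc 1 n))
    (h1 : ¬ (∃ i j : ℕ, 1 ≤ i ∧ i < j ∧ j + 1 ≤ n ∧ π i < π j ∧ π j < π (j+1))) (h2 : ¬ (∃ i k : ℕ, 1 ≤ i ∧ i + 1 < k ∧ k ≤ n ∧ π k < π i ∧ π i < π (i+1))) :
    ¬ (∃ i k : ℕ, 1 ≤ i ∧ i + 1 < k ∧ k ≤ n ∧ π i < π (i+1) ∧ π (i+1) < π k) := by
  rintro ⟨i, k, hi, hik, hkn, hup, hlt⟩
  obtain ⟨j, hij, hjk, hjle, hjlt⟩ := Nat.exists_upcrossing_step π hik hlt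
  rcases lt_trichotomy (π i) (π j) with hij' | heq | hji
  · exact h1 ⟨i, j, hi, by omega, by omega, hij', hjle.trans_lt hjlt⟩
  · have := hπ.injOn ⟨hi, by omega⟩ ⟨by omega, by omega⟩ heq
    omega
  · have hj : j ≠ i + 1 := by rintro rfl; exact hji.not_gt hup
    exact h2 ⟨i, j, hi, by omega, by omega, hji, hup⟩
end

section
/- Let π be a permutation of {1,...,n} with n ≥ 1 that avoids the patterns 2-31 (no i < j with π(j+1) < π(i) < π(j)) and 1-32 (no i < j with π(i) < π(j+1) < π(j)). Then the maximum value n occurs at the first or last position: π(1) = n or π(n) = n. -/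
/-
Let `k` be the position of `n`. If `1 < k < n`, then `π 1` and `π (k+1)` are distinct and both
smaller than `π k = n`, so `(1, k, k+1)` is an occurrence of `1-32` or of `2-31`, according as
`π 1 < π (k+1)` or `π (k+1) < π 1`.
-/

lemma Set.InjOn.lt_of_ne_of_eq {α β : Type*} [PartialOrder β] {s : Set α} {f : α → β}
    {b : β} {x y : α} (hinj : s.InjOn f) (hmaps : s.MapsTo f (Set.Iic b)) (hx : x ∈ s)
    (hy : y ∈ s) (hxy : x ≠ y) (hfy : f y = b) : f x < b :=
  (hmaps hx).lt_of_ne fun h ↦ hxy (hinj hx hy (h.trans hfy.symm))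

theorem stmt_8 (n : ℕ) (π : ℕ → ℕ)
    (hπ : Set.BijOn π (Set.Icc 1 n) (Set.Icc 1 n))
    (hn : 1 ≤ n)
    (h1 : ¬ (∃ i j : ℕ, 1 ≤ i ∧ i < j ∧ j + 1 ≤ n ∧ π (j+1) < π i ∧ π i < π j)) (h2 : ¬ (∃ i j : ℕ, 1 ≤ i ∧ i < j ∧ j + 1 ≤ n ∧ π i < π (j+1) ∧ π (j+1) < π j)) :
    π 1 = n ∨ π n = n := by
  obtain ⟨k, ⟨hk1, hkn⟩, hπk⟩ := hπ.surjOn (⟨hn, le_rfl⟩ : n ∈ Set.Icc 1 n)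
  rcases hk1.eq_or_lt with rfl | hk1
  · exact .inl hπk
  rcases hkn.eq_or_lt with rfl | hkn
  · exact .inr hπk
  have hmaps : (Set.Icc 1 n).MapsTo π (Set.Iic n) := fun i hi ↦ (hπ.mapsTo hi).2
  have hk : k ∈ Set.Icc 1 n := ⟨hk1.le, hkn.le⟩
  have hπ1 : π 1 < π k := hπk ▸
    hπ.injOn.lt_of_ne_of_eq hmaps ⟨le_rfl, hn⟩ hk hk1.ne hπk
  have hπk' : π (k + 1) < π k := hπk ▸
    hπ.injOn.lt_of_ne_of_eq hmaps ⟨by omega, hkn⟩ hk (by omega) hπk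
  have hne : π 1 ≠ π (k + 1) := fun h ↦
    absurd (hπ.injOn ⟨le_rfl, hn⟩ ⟨by omega, hkn⟩ h) (by omega)
  exfalso
  rcases hne.lt_or_gt with h | h
  · exact h2 ⟨1, k, le_rfl, hk1, hkn, h, hπk'⟩
  · exact h1 ⟨1, k, le_rfl, hk1, hkn, h, hπ1⟩
end

section
/- Let π be a permutation of {1,...,n} with n ≥ 2 that avoids the patterns 1-23 (no i < j with π(i) < π(j) < π(j+1)) and 2-13 (no i < j with π(j) < π(i) < π(j+1)). Then the value n occurs in one of the first two positions: π(1) = n or π(2) = n. -/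
/-! If `n` sat at a position `k ≥ 3`, compare `π 1` with `π (k - 1)`: both are below `π k = n`,
so the triple of positions `1 < k - 1 < k` realises `1-23` or `2-13`, according to which of the
two is smaller. -/

lemma Set.BijOn.lt_of_ne_of_apply_eq {π : ℕ → ℕ} {n i k : ℕ}
    (hπ : Set.BijOn π (Set.Icc 1 n) (Set.Icc 1 n)) (hi : i ∈ Set.Icc 1 n) (hk : k ∈ Set.Icc 1 n)
    (hik : i ≠ k) (hπk : π k = n) : π i < n :=
  lt_of_le_of_ne (hπ.mapsTo hi).2 fun h => hik (hπ.injOn hi hk (h.trans hπk.symm))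

lemma false_of_lt_apply_succ_of_lt_apply_succ {π : ℕ → ℕ} {n i j : ℕ}
    (h1 : ¬ (∃ i j : ℕ, 1 ≤ i ∧ i < j ∧ j + 1 ≤ n ∧ π i < π j ∧ π j < π (j+1)))
    (h2 : ¬ (∃ i j : ℕ, 1 ≤ i ∧ i < j ∧ j + 1 ≤ n ∧ π j < π i ∧ π i < π (j+1)))
    (hi : 1 ≤ i) (hij : i < j) (hj : j + 1 ≤ n) (hne : π i ≠ π j)
    (hi_lt : π i < π (j + 1)) (hj_lt : π j < π (j + 1)) : False := by
  rcases hne.lt_or_gt with h | h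
  · exact h1 ⟨i, j, hi, hij, hj, h, hj_lt⟩
  · exact h2 ⟨i, j, hi, hij, hj, h, hi_lt⟩

theorem stmt_10 (n : ℕ) (π : ℕ → ℕ)
    (hπ : Set.BijOn π (Set.Icc 1 n) (Set.Icc 1 n))
    (hn : 2 ≤ n)
    (h1 : ¬ (∃ i j : ℕ, 1 ≤ i ∧ i < j ∧ j + 1 ≤ n ∧ π i < π j ∧ π j < π (j+1))) (h2 : ¬ (∃ i j : ℕ, 1 ≤ i ∧ i < j ∧ j + 1 ≤ n ∧ π j < π i ∧ π i < π (j+1))) :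
    π 1 = n ∨ π 2 = n := by
  obtain ⟨k, hk, hπk⟩ := hπ.surjOn (Set.right_mem_Icc.mpr (by omega : 1 ≤ n))
  obtain rfl | rfl | hk3 : k = 1 ∨ k = 2 ∨ 3 ≤ k := by have := hk.1; omega
  · exact Or.inl hπk
  · exact Or.inr hπk
  exfalso
  have hk' : k - 1 + 1 = k := by omega
  have h1mem : 1 ∈ Set.Icc 1 n := ⟨le_rfl, by omega⟩
  have hjmem : k - 1 ∈ Set.Icc 1 n := ⟨by omega, by have := hk.2; omega⟩
  refine false_of_lt_apply_succ_of_lt_apply_succ h1 h2 le_rfl (j := k - 1) (by omega)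
    (by rw [hk']; exact hk.2) (fun h => by have := hπ.injOn h1mem hjmem h; omega) ?_ ?_
  · rw [hk', hπk]; exact hπ.lt_of_ne_of_apply_eq h1mem hk (by omega) hπk
  · rw [hk', hπk]; exact hπ.lt_of_ne_of_apply_eq hjmem hk (by omega) hπk
end

section
/- Let n ≥ 2. A permutation π of {1,...,n} avoids all four patterns 2-13 (no i < j with π(j) < π(i) < π(j+1)), 2-31 (no i < j with π(j+1) < π(i) < π(j)), 1-32 (no i < j with π(i) < π(j+1) < π(j)), and 3-12 (no i < j with π(j) < π(j+1) < π(i)) if and only if π is the identity permutation or the decreasing permutation π(i) = n+1−i. In particular, the number of such permutations of length n is exactly 2. -/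
/-!
For `i < j`, avoiding 2-13 and 3-12 forces `π i < π j` whenever `j` is an ascent, and avoiding
2-31 and 1-32 forces `π j < π i` whenever `j` is a descent; complementation `π ↦ n + 1 - π`
exchanges the two pairs of patterns, so the second fact is the first one in the dual order.
Taking `i` to be the first position, every step of `π` goes in the same direction as its first
step, so `π` is increasing or decreasing.
-/

open Function OrderDual Equiv

variable {α : Type*} [LinearOrder α] {n : ℕ}

-- The four conjuncts exclude the patterns 2-13, 2-31, 1-32 and 3-12, in this order.
def AvoidsPatterns (f : Fin n → α) : Prop :=
  (¬ ∃ (i j : Fin n) (h : (j : ℕ) + 1 < n), i < j ∧ f j < f i ∧ f i < f ⟨(j : ℕ) + 1, h⟩) ∧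
  (¬ ∃ (i j : Fin n) (h : (j : ℕ) + 1 < n), i < j ∧ f ⟨(j : ℕ) + 1, h⟩ < f i ∧ f i < f j) ∧
  (¬ ∃ (i j : Fin n) (h : (j : ℕ) + 1 < n),
    i < j ∧ f i < f ⟨(j : ℕ) + 1, h⟩ ∧ f ⟨(j : ℕ) + 1, h⟩ < f j) ∧
  (¬ ∃ (i j : Fin n) (h : (j : ℕ) + 1 < n),
    i < j ∧ f j < f ⟨(j : ℕ) + 1, h⟩ ∧ f ⟨(j : ℕ) + 1, h⟩ < f i)

namespace AvoidsPatterns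

theorem toDual_comp {f : Fin n → α} (hf : AvoidsPatterns f) : AvoidsPatterns (toDual ∘ f) := by
  obtain ⟨h₁, h₂, h₃, h₄⟩ := hf
  exact ⟨fun ⟨i, j, h, hij, a, b⟩ => h₂ ⟨i, j, h, hij, b, a⟩,
    fun ⟨i, j, h, hij, a, b⟩ => h₁ ⟨i, j, h, hij, b, a⟩,
    fun ⟨i, j, h, hij, a, b⟩ => h₄ ⟨i, j, h, hij, b, a⟩,
    fun ⟨i, j, h, hij, a, b⟩ => h₃ ⟨i, j, h, hij, b, a⟩⟩

theorem of_strictMono {f : Fin n → α} (hf : StrictMono f) : AvoidsPatterns f := by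
  have increasing (i j : Fin n) (h : (j : ℕ) + 1 < n) (hij : i < j) :
      f i < f j ∧ f j < f ⟨j + 1, h⟩ :=
    ⟨hf hij, hf (Nat.lt_succ_self _)⟩
  refine ⟨?_, ?_, ?_, ?_⟩ <;> rintro ⟨i, j, h, hij, a, b⟩ <;>
    obtain ⟨hi, hj⟩ := increasing i j h hij <;> order

theorem of_strictAnti {f : Fin n → α} (hf : StrictAnti f) : AvoidsPatterns f :=
  (of_strictMono (f := toDual ∘ f) hf).toDual_comp

theorem lt_of_lt_succ {f : Fin n → α} (hf : AvoidsPatterns f) (hinj : Injective f)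
    {i j : Fin n} (hij : i < j) (hj : (j : ℕ) + 1 < n) (hasc : f j < f ⟨j + 1, hj⟩) :
    f i < f j := by
  refine (hinj.ne hij.ne).lt_or_gt.resolve_right fun hji => ?_
  have hi : i ≠ ⟨j + 1, hj⟩ := (hij.trans (Nat.lt_succ_self _)).ne
  rcases (hinj.ne hi).lt_or_gt with h | h
  · exact hf.1 ⟨i, j, hj, hij, hji, h⟩
  · exact hf.2.2.2 ⟨i, j, hj, hij, hasc, h⟩

theorem lt_iff_lt_succ {f : Fin (n + 1) → α} (hf : AvoidsPatterns f) (hinj : Injective f)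
    {i : Fin (n + 1)} {j : Fin n} (hij : i < j.castSucc) :
    f i < f j.castSucc ↔ f j.castSucc < f j.succ := by
  have hj : (j.castSucc : ℕ) + 1 < n + 1 := by simp
  refine ⟨fun h => ?_, hf.lt_of_lt_succ hinj hij hj⟩
  refine (hinj.ne Fin.castSucc_lt_succ.ne).lt_or_gt.resolve_right fun hdesc => ?_
  exact (hf.toDual_comp.lt_of_lt_succ (toDual.injective.comp hinj) hij hj hdesc).not_gt h

theorem strictMono {f : Fin (n + 2) → α} (hf : AvoidsPatterns f) (hinj : Injective f)
    (h01 : f 0 < f 1) : StrictMono f := by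
  have above_first (j : Fin (n + 1)) : f 0 < f j.succ := by
    induction j using Fin.induction with
    | zero => simpa using h01
    | succ j ih =>
      rw [Fin.succ_castSucc] at ih
      exact ih.trans ((hf.lt_iff_lt_succ hinj (Fin.castSucc_pos (Fin.succ_pos j))).1 ih)
  refine Fin.strictMono_iff_lt_succ.2 fun j => ?_
  cases j using Fin.cases with
  | zero => simpa using h01
  | succ j =>
    have := above_first j.castSucc
    rw [Fin.succ_castSucc] at this
    exact (hf.lt_iff_lt_succ hinj (Fin.castSucc_pos (Fin.succ_pos j))).1 this

end AvoidsPatterns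

theorem Equiv.Perm.eq_one_of_strictMono {π : Perm (Fin n)} (h : StrictMono π) : π = 1 :=
  Equiv.ext <| congrFun <| (h.range_inj strictMono_id).1 <| by simp

theorem Equiv.Perm.eq_revPerm_of_strictAnti {π : Perm (Fin n)} (h : StrictAnti π) :
    π = Fin.revPerm :=
  Equiv.ext <| congrFun <| (h.range_inj Fin.rev_strictAnti).1 <| by simp

theorem avoidsPatterns_iff_eq_one_or_eq_revPerm {π : Perm (Fin (n + 2))} :
    AvoidsPatterns π ↔ π = 1 ∨ π = Fin.revPerm := by
  refine ⟨fun h => ?_, ?_⟩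
  · rcases (π.injective.ne (show (0 : Fin (n + 2)) ≠ 1 by simp)).lt_or_gt with h01 | h10
    · exact .inl (π.eq_one_of_strictMono (h.strictMono π.injective h01))
    · exact .inr (π.eq_revPerm_of_strictAnti
        (h.toDual_comp.strictMono (toDual.injective.comp π.injective) h10))
  · rintro (rfl | rfl)
    · exact .of_strictMono strictMono_id
    · exact .of_strictAnti Fin.rev_strictAnti

theorem stmt_11 (n : ℕ) (hn : 2 ≤ n) :
    (∀ π : Equiv.Perm (Fin n),
      ((¬ (∃ (i j : Fin n) (h : (j : ℕ) + 1 < n), i < j ∧ π j < π i ∧ π i < π ⟨(j : ℕ) + 1, h⟩)) ∧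
      (¬ (∃ (i j : Fin n) (h : (j : ℕ) + 1 < n), i < j ∧ π ⟨(j : ℕ) + 1, h⟩ < π i ∧ π i < π j)) ∧
      (¬ (∃ (i j : Fin n) (h : (j : ℕ) + 1 < n), i < j ∧ π i < π ⟨(j : ℕ) + 1, h⟩ ∧ π ⟨(j : ℕ) + 1, h⟩ < π j)) ∧
      (¬ (∃ (i j : Fin n) (h : (j : ℕ) + 1 < n), i < j ∧ π j < π ⟨(j : ℕ) + 1, h⟩ ∧ π ⟨(j : ℕ) + 1, h⟩ < π i)))
      ↔
      ((∀ i : Fin n, π i = i) ∨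
      (∀ i : Fin n, (π i : ℕ) = n - 1 - (i : ℕ)))) ∧
    Set.ncard {π : Equiv.Perm (Fin n) |
      (¬ (∃ (i j : Fin n) (h : (j : ℕ) + 1 < n), i < j ∧ π j < π i ∧ π i < π ⟨(j : ℕ) + 1, h⟩)) ∧
      (¬ (∃ (i j : Fin n) (h : (j : ℕ) + 1 < n), i < j ∧ π ⟨(j : ℕ) + 1, h⟩ < π i ∧ π i < π j)) ∧
      (¬ (∃ (i j : Fin n) (h : (j : ℕ) + 1 < n), i < j ∧ π i < π ⟨(j : ℕ) + 1, h⟩ ∧ π ⟨(j : ℕ) + 1, h⟩ < π j)) ∧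
      (¬ (∃ (i j : Fin n) (h : (j : ℕ) + 1 < n), i < j ∧ π j < π ⟨(j : ℕ) + 1, h⟩ ∧ π ⟨(j : ℕ) + 1, h⟩ < π i))} = 2 := by
  obtain ⟨m, rfl⟩ : ∃ m, n = m + 2 := ⟨n - 2, by omega⟩
  have hclass (π : Perm (Fin (m + 2))) := avoidsPatterns_iff_eq_one_or_eq_revPerm (π := π)
  refine ⟨fun π => (hclass π).trans ?_, ?_⟩
  · simp only [Equiv.ext_iff, Fin.ext_iff, Perm.one_apply, Fin.revPerm_apply, Fin.val_rev]
    exact or_congr Iff.rfl (forall_congr' fun i => by omega)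
  · rw [Set.ext hclass]
    refine Set.ncard_pair fun h => ?_
    simpa using DFunLike.congr_fun h 0
end

section
/- Let n ≥ 2. A permutation π of {1,...,n} avoids the four patterns 1-23, 2-13, 1-32, and 3-12 if and only if π equals n (n−1) ... 2 1 or (n−1) n (n−2) (n−3) ... 2 1. In particular, there are exactly 2 such permutations of each length n ≥ 2. -/
/-!
For three distinct values `a = π i`, `b = π j`, `c = π (j+1)` with `i < j`, the patterns
1-23, 2-13, 1-32 and 3-12 are exactly the relative orders in which `c` is not the smallest.
Avoiding all four therefore means that every entry from position `2` on is smaller than every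
earlier entry. Counting the positions before and after such an entry forces `π p = n - 1 - p`
for `p ≥ 2`, and the two largest values are left for positions `0` and `1`, in either order.
-/

open Equiv Function

namespace PatternAvoidance

variable {n : ℕ}

section Patterns

variable {α : Type*} [LinearOrder α]

/-- `f` avoids the vincular patterns 1-23, 2-13, 1-32 and 3-12. -/
def AvoidsFourPatterns (f : Fin n → α) : Prop :=
  (¬ (∃ (i j : Fin n) (h : (j : ℕ) + 1 < n), i < j ∧ f i < f j ∧ f j < f ⟨(j : ℕ) + 1, h⟩)) ∧
  (¬ (∃ (i j : Fin n) (h : (j : ℕ) + 1 < n), i < j ∧ f j < f i ∧ f i < f ⟨(j : ℕ) + 1, h⟩)) ∧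
  (¬ (∃ (i j : Fin n) (h : (j : ℕ) + 1 < n), i < j ∧ f i < f ⟨(j : ℕ) + 1, h⟩ ∧ f ⟨(j : ℕ) + 1, h⟩ < f j)) ∧
  (¬ (∃ (i j : Fin n) (h : (j : ℕ) + 1 < n), i < j ∧ f j < f ⟨(j : ℕ) + 1, h⟩ ∧ f ⟨(j : ℕ) + 1, h⟩ < f i))

def LeftToRightMinimaFromTwo (f : Fin n → α) : Prop :=
  ∀ p k : Fin n, 2 ≤ (p : ℕ) → k < p → f p < f k

lemma lt_and_lt_of_not_patterns {a b c : α} (hab : a ≠ b) (hac : a ≠ c) (hbc : b ≠ c)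
    (h₁ : ¬ (a < b ∧ b < c)) (h₂ : ¬ (b < a ∧ a < c)) (h₃ : ¬ (a < c ∧ c < b))
    (h₄ : ¬ (b < c ∧ c < a)) : c < a ∧ c < b := by
  rcases lt_or_gt_of_ne hab with hab | hab <;> rcases lt_or_gt_of_ne hac with hac | hac <;>
    rcases lt_or_gt_of_ne hbc with hbc | hbc <;> simp_all

lemma avoidsFourPatterns_iff {f : Fin n → α} (hf : Injective f) :
    AvoidsFourPatterns f ↔ ∀ (i j : Fin n) (h : (j : ℕ) + 1 < n), i < j →
      f ⟨(j : ℕ) + 1, h⟩ < f i ∧ f ⟨(j : ℕ) + 1, h⟩ < f j := by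
  constructor
  · rintro ⟨h₁, h₂, h₃, h₄⟩ i j h hij
    have hj : j < ⟨(j : ℕ) + 1, h⟩ := Fin.lt_def.mpr (Nat.lt_succ_self _)
    exact lt_and_lt_of_not_patterns (hf.ne hij.ne) (hf.ne (hij.trans hj).ne) (hf.ne hj.ne)
      (fun hc => h₁ ⟨i, j, h, hij, hc⟩) (fun hc => h₂ ⟨i, j, h, hij, hc⟩)
      (fun hc => h₃ ⟨i, j, h, hij, hc⟩) (fun hc => h₄ ⟨i, j, h, hij, hc⟩)
  · intro H
    refine ⟨?_, ?_, ?_, ?_⟩ <;> rintro ⟨i, j, h, hij, hx, hy⟩ <;>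
      · have := H i j h hij
        order

lemma avoidsFourPatterns_iff_leftToRightMinimaFromTwo {f : Fin n → α} (hf : Injective f) :
    AvoidsFourPatterns f ↔ LeftToRightMinimaFromTwo f := by
  rw [avoidsFourPatterns_iff hf]
  constructor
  · intro H p k hp hk
    have hk' : (k : ℕ) < p := hk
    have := p.isLt
    obtain ⟨j, h, rfl⟩ : ∃ (j : Fin n) (h : (j : ℕ) + 1 < n), p = ⟨(j : ℕ) + 1, h⟩ :=
      ⟨⟨p - 1, by omega⟩, by simp only; omega, Fin.ext (by simp only; omega)⟩
    simp only at hp hk'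
    by_cases hkj : (k : ℕ) < j
    · exact (H k j h hkj).1
    · obtain rfl : k = j := Fin.ext (by omega)
      -- position `0` serves as the `1` of the pattern ending at `p`
      exact (H ⟨0, by omega⟩ k h (Fin.lt_def.mpr (by simp only; omega))).2
  · intro H i j h hij
    have hij' : (i : ℕ) < j := hij
    exact ⟨H _ i (by simp only; omega) (Fin.lt_def.mpr (by simp only; omega)),
      H _ j (by simp only; omega) (Fin.lt_def.mpr (by simp only; omega))⟩

end Patterns

section Counting

variable {m : ℕ} {f : Fin m → Fin n}

lemma sub_le_val_of_forall_gt (hf : Injective f) {j k : Fin m} (h : ∀ q, j < q → f q < f k) :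
    m - 1 - j ≤ f k := by
  have := Finset.card_le_card_of_injOn f (s := Finset.Ioi j) (t := Finset.Iio (f k))
    (fun q hq => by simpa using h q (by simpa using hq)) hf.injOn
  simpa [Fin.card_Ioi, Fin.card_Iio] using this

lemma le_sub_val_of_forall_lt (hf : Injective f) {j p : Fin m} (h : ∀ q, q < j → f p < f q) :
    (j : ℕ) ≤ n - 1 - f p := by
  have := Finset.card_le_card_of_injOn f (s := Finset.Iio j) (t := Finset.Ioi (f p))
    (fun q hq => by simpa using h q (by simpa using hq)) hf.injOn
  simpa [Fin.card_Ioi, Fin.card_Iio] using this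

end Counting

section Classification

/-- `π` is the decreasing permutation `n (n-1) ⋯ 1`, with values shifted to `Fin n`. -/
def IsReverse (π : Perm (Fin n)) : Prop :=
  ∀ i : Fin n, (π i : ℕ) = n - 1 - (i : ℕ)

/-- `π` is the permutation `(n-1) n (n-2) ⋯ 1`, with values shifted to `Fin n`. -/
def IsReverseSwap (π : Perm (Fin n)) : Prop :=
  ∀ i : Fin n, ((i : ℕ) = 0 → (π i : ℕ) = n - 2) ∧ ((i : ℕ) = 1 → (π i : ℕ) = n - 1) ∧
    (2 ≤ (i : ℕ) → (π i : ℕ) = n - 1 - (i : ℕ))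

lemma isReverse_iff {π : Perm (Fin n)} : IsReverse π ↔ π = Fin.revPerm := by
  simp only [IsReverse, Equiv.ext_iff, Fin.ext_iff, Fin.revPerm_apply, Fin.val_rev]
  refine forall_congr' fun i => ?_
  omega

lemma IsReverseSwap.eq {π σ : Perm (Fin n)} (hπ : IsReverseSwap π) (hσ : IsReverseSwap σ) :
    π = σ := by
  ext i
  obtain ⟨hπ₀, hπ₁, hπ₂⟩ := hπ i
  obtain ⟨hσ₀, hσ₁, hσ₂⟩ := hσ i
  obtain hi | hi | hi : (i : ℕ) = 0 ∨ (i : ℕ) = 1 ∨ 2 ≤ (i : ℕ) := by omega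
  · rw [hπ₀ hi, hσ₀ hi]
  · rw [hπ₁ hi, hσ₁ hi]
  · rw [hπ₂ hi, hσ₂ hi]

lemma exists_isReverseSwap (hn : 2 ≤ n) : ∃ σ : Perm (Fin n), IsReverseSwap σ := by
  have h₀ : 0 < n := by omega
  have h₁ : 1 < n := hn
  refine ⟨(swap ⟨0, h₀⟩ ⟨1, h₁⟩).trans Fin.revPerm, fun i => ⟨fun hi => ?_, fun hi => ?_,
    fun hi => ?_⟩⟩
  · obtain rfl : i = ⟨0, h₀⟩ := Fin.ext hi
    simp [Fin.val_rev]
  · obtain rfl : i = ⟨1, h₁⟩ := Fin.ext hi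
    simp [Fin.val_rev]
  · rw [trans_apply, swap_apply_of_ne_of_ne (Fin.ne_of_val_ne (by simp only; omega))
      (Fin.ne_of_val_ne (by simp only; omega))]
    simp only [Fin.revPerm_apply, Fin.val_rev]
    omega

lemma IsReverse.not_isReverseSwap (hn : 2 ≤ n) {π : Perm (Fin n)} (h : IsReverse π) :
    ¬ IsReverseSwap π := fun h' => by
  have h₀ := h ⟨0, by omega⟩
  have h₀' := (h' ⟨0, by omega⟩).1 rfl
  simp only at h₀ h₀'
  omega

namespace LeftToRightMinimaFromTwo

variable {π : Perm (Fin n)}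

lemma val_eq_of_two_le (H : LeftToRightMinimaFromTwo π) {p : Fin n} (hp : 2 ≤ (p : ℕ)) :
    (π p : ℕ) = n - 1 - p := by
  have hle := le_sub_val_of_forall_lt π.injective fun k hk => H p k hp hk
  have hge := sub_le_val_of_forall_gt π.injective fun q hq =>
    H q p (hp.trans (Fin.lt_def.mp hq).le) hq
  have := (π p).isLt
  omega

lemma sub_two_le_val (H : LeftToRightMinimaFromTwo π) (hn : 2 ≤ n) {k : Fin n}
    (hk : (k : ℕ) ≤ 1) : n - 2 ≤ (π k : ℕ) :=
  sub_le_val_of_forall_gt (j := ⟨1, hn⟩) π.injective fun q hq =>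
    have hq : 1 < (q : ℕ) := hq
    H q k hq (Fin.lt_def.mpr (by omega))

lemma isReverse_or_isReverseSwap (H : LeftToRightMinimaFromTwo π) (hn : 2 ≤ n) :
    IsReverse π ∨ IsReverseSwap π := by
  have h₀ : 0 < n := by omega
  have h₁ : 1 < n := hn
  have hπ₀ := H.sub_two_le_val hn (k := ⟨0, h₀⟩) (Nat.zero_le 1)
  have hπ₁ := H.sub_two_le_val hn (k := ⟨1, h₁⟩) le_rfl
  have hπ₀₁ : (π ⟨0, h₀⟩ : ℕ) ≠ π ⟨1, h₁⟩ := fun h =>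
    absurd (π.injective (Fin.ext h)) (by simp)
  have := (π ⟨0, h₀⟩).isLt
  have := (π ⟨1, h₁⟩).isLt
  by_cases hlast : (π ⟨0, h₀⟩ : ℕ) = n - 1
  · left
    intro i
    obtain hi | hi | hi : (i : ℕ) = 0 ∨ (i : ℕ) = 1 ∨ 2 ≤ (i : ℕ) := by omega
    · obtain rfl : i = ⟨0, h₀⟩ := Fin.ext hi
      simpa using hlast
    · obtain rfl : i = ⟨1, h₁⟩ := Fin.ext hi
      simp only
      omega
    · exact H.val_eq_of_two_le hi
  · right
    intro i
    refine ⟨fun hi => ?_, fun hi => ?_, H.val_eq_of_two_le⟩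
    · obtain rfl : i = ⟨0, h₀⟩ := Fin.ext hi
      omega
    · obtain rfl : i = ⟨1, h₁⟩ := Fin.ext hi
      omega

end LeftToRightMinimaFromTwo

lemma IsReverse.leftToRightMinimaFromTwo {π : Perm (Fin n)} (h : IsReverse π) :
    LeftToRightMinimaFromTwo π := fun p k _ hk => by
  have hk : (k : ℕ) < p := hk
  have := p.isLt
  rw [Fin.lt_def, h p, h k]
  omega

lemma IsReverseSwap.leftToRightMinimaFromTwo {π : Perm (Fin n)} (h : IsReverseSwap π) :
    LeftToRightMinimaFromTwo π := fun p k hp hk => by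
  have hk : (k : ℕ) < p := hk
  have := p.isLt
  obtain ⟨hk₀, hk₁, hk₂⟩ := h k
  rw [Fin.lt_def, (h p).2.2 hp]
  obtain hk | hk | hk : (k : ℕ) = 0 ∨ (k : ℕ) = 1 ∨ 2 ≤ (k : ℕ) := by omega
  · rw [hk₀ hk]; omega
  · rw [hk₁ hk]; omega
  · rw [hk₂ hk]; omega

lemma leftToRightMinimaFromTwo_iff (hn : 2 ≤ n) (π : Perm (Fin n)) :
    LeftToRightMinimaFromTwo π ↔ IsReverse π ∨ IsReverseSwap π :=
  ⟨fun H => H.isReverse_or_isReverseSwap hn,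
    fun h => h.elim IsReverse.leftToRightMinimaFromTwo IsReverseSwap.leftToRightMinimaFromTwo⟩

end Classification

end PatternAvoidance

open PatternAvoidance in
theorem stmt_13 (n : ℕ) (hn : 2 ≤ n) :
    (∀ π : Equiv.Perm (Fin n),
      ((¬ (∃ (i j : Fin n) (h : (j : ℕ) + 1 < n), i < j ∧ π i < π j ∧ π j < π ⟨(j : ℕ) + 1, h⟩)) ∧
      (¬ (∃ (i j : Fin n) (h : (j : ℕ) + 1 < n), i < j ∧ π j < π i ∧ π i < π ⟨(j : ℕ) + 1, h⟩)) ∧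
      (¬ (∃ (i j : Fin n) (h : (j : ℕ) + 1 < n), i < j ∧ π i < π ⟨(j : ℕ) + 1, h⟩ ∧ π ⟨(j : ℕ) + 1, h⟩ < π j)) ∧
      (¬ (∃ (i j : Fin n) (h : (j : ℕ) + 1 < n), i < j ∧ π j < π ⟨(j : ℕ) + 1, h⟩ ∧ π ⟨(j : ℕ) + 1, h⟩ < π i)))
      ↔
      ((∀ i : Fin n, (π i : ℕ) = n - 1 - (i : ℕ)) ∨
      (∀ i : Fin n, ((i : ℕ) = 0 → (π i : ℕ) = n - 2) ∧ ((i : ℕ) = 1 → (π i : ℕ) = n - 1) ∧ (2 ≤ (i : ℕ) → (π i : ℕ) = n - 1 - (i : ℕ))))) ∧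
    Set.ncard {π : Equiv.Perm (Fin n) |
      (¬ (∃ (i j : Fin n) (h : (j : ℕ) + 1 < n), i < j ∧ π i < π j ∧ π j < π ⟨(j : ℕ) + 1, h⟩)) ∧
      (¬ (∃ (i j : Fin n) (h : (j : ℕ) + 1 < n), i < j ∧ π j < π i ∧ π i < π ⟨(j : ℕ) + 1, h⟩)) ∧
      (¬ (∃ (i j : Fin n) (h : (j : ℕ) + 1 < n), i < j ∧ π i < π ⟨(j : ℕ) + 1, h⟩ ∧ π ⟨(j : ℕ) + 1, h⟩ < π j)) ∧
      (¬ (∃ (i j : Fin n) (h : (j : ℕ) + 1 < n), i < j ∧ π j < π ⟨(j : ℕ) + 1, h⟩ ∧ π ⟨(j : ℕ) + 1, h⟩ < π i))} = 2 := by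
  have key (π : Equiv.Perm (Fin n)) : AvoidsFourPatterns π ↔ IsReverse π ∨ IsReverseSwap π :=
    (avoidsFourPatterns_iff_leftToRightMinimaFromTwo π.injective).trans
      (leftToRightMinimaFromTwo_iff hn π)
  obtain ⟨σ, hσ⟩ := exists_isReverseSwap hn
  have hset : {π : Equiv.Perm (Fin n) | AvoidsFourPatterns π} = {Fin.revPerm, σ} := by
    ext π
    rw [Set.mem_ofPred_eq, key, isReverse_iff, Set.mem_insert_iff, Set.mem_singleton_iff]
    exact or_congr_right ⟨fun h => h.eq hσ, fun h => h ▸ hσ⟩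
  have hne : Fin.revPerm ≠ σ := fun h =>
    (isReverse_iff.mpr rfl).not_isReverseSwap hn (h ▸ hσ)
  exact ⟨key, (congrArg Set.ncard hset).trans (Set.ncard_pair hne)⟩
end

section
/- Let n ≥ 2. A permutation π of {1,...,n} avoids the four patterns 1-23, 2-13, 2-31, and 3-12 if and only if π equals n (n−1) ... 2 1 or 1 n (n−1) ... 3 2. In particular, there are exactly 2 such permutations of each length n ≥ 2. -/
/-!
If `π` avoids `1-23`, `2-13` and `3-12`, then for `j ≥ 1` every ascent `π j < π (j + 1)` would
form one of these patterns with `π 0`, whichever way `π 0` compares to it; so `π` decreases from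
position `1` on. Avoiding `2-31` then keeps `π 0` out of every gap `π (j + 1) < π 0 < π j`, so `π 0`
lies above or below all later values. As those fill the rest of `{0, …, n - 1}` in decreasing
order, `π` is `n-1 ⋯ 1 0` or `0 n-1 ⋯ 1`.
-/

namespace DashPattern

variable {n : ℕ} {α : Type*}

/-- An occurrence of a pattern `x-yz` whose last two entries are adjacent: positions `i < j` such
that the values `π i`, `π j`, `π (j + 1)` satisfy `P`. -/
def Occurs (P : α → α → α → Prop) (π : Fin n → α) : Prop :=
  ∃ (i j : Fin n) (h : (j : ℕ) + 1 < n), i < j ∧ P (π i) (π j) (π ⟨(j : ℕ) + 1, h⟩)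

/-- Avoidance of `1-23`, `2-13`, `2-31` and `3-12`. -/
def AvoidsFour [LT α] (π : Fin n → α) : Prop :=
  ¬ Occurs (fun a b c => a < b ∧ b < c) π ∧ ¬ Occurs (fun a b c => b < a ∧ a < c) π ∧
    ¬ Occurs (fun a b c => c < a ∧ a < b) π ∧ ¬ Occurs (fun a b c => b < c ∧ c < a) π

theorem avoidsFour_iff [LinearOrder α] {π : Fin n → α} (hπ : Function.Injective π) :
    AvoidsFour π ↔ ∀ i j : Fin n, i < j → ∀ h : (j : ℕ) + 1 < n,
      π ⟨(j : ℕ) + 1, h⟩ < π j ∧ ¬ (π ⟨(j : ℕ) + 1, h⟩ < π i ∧ π i < π j) := by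
  constructor
  · rintro ⟨h123, h213, h231, h312⟩ i j hij hj
    refine ⟨?_, fun hgap => h231 ⟨i, j, hj, hij, hgap⟩⟩
    have hi_ne_j : π i ≠ π j := hπ.ne hij.ne
    have hj_ne_succ : π j ≠ π ⟨(j : ℕ) + 1, hj⟩ := hπ.ne (by simp [Fin.ext_iff])
    have hi_ne_succ : π i ≠ π ⟨(j : ℕ) + 1, hj⟩ :=
      hπ.ne (by rw [Fin.lt_def] at hij; simp [Fin.ext_iff]; omega)
    by_contra! hasc
    replace hasc := lt_of_le_of_ne hasc hj_ne_succ
    rcases hi_ne_j.lt_or_gt with hlt | hgt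
    · exact h123 ⟨i, j, hj, hij, hlt, hasc⟩
    · rcases hi_ne_succ.lt_or_gt with hlt' | hgt'
      · exact h213 ⟨i, j, hj, hij, hgt, hlt'⟩
      · exact h312 ⟨i, j, hj, hij, hasc, hgt'⟩
  · intro h
    refine ⟨?_, ?_, ?_, ?_⟩ <;> rintro ⟨i, j, hj, hij, hP⟩ <;>
      obtain ⟨hdesc, hgap⟩ := h i j hij hj
    exacts [by order, by order, hgap hP, by order]

theorem add_sub_le_of_succ_lt {p : ℕ → ℕ} {a b : ℕ} (h : ∀ k, a ≤ k → k < b → p (k + 1) < p k)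
    {i j : ℕ} (hai : a ≤ i) (hij : i ≤ j) (hjb : j ≤ b) : p j + (j - i) ≤ p i := by
  induction j, hij using Nat.le_induction with
  | base => simp
  | succ j hij ih =>
    have := h j (by omega) (by omega)
    have := ih (by omega)
    omega

theorem eq_of_succ_lt_of_not_mem_gap {p : ℕ → ℕ} (hn : 2 ≤ n) (hlt : ∀ k < n, p k < n)
    (hne : ∀ k, 1 ≤ k → k < n → p k ≠ p 0)
    (hdesc : ∀ k, 1 ≤ k → k + 1 < n → p (k + 1) < p k)
    (hgap : ∀ k, 1 ≤ k → k + 1 < n → ¬ (p (k + 1) < p 0 ∧ p 0 < p k)) :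
    (∀ k < n, p k = n - 1 - k) ∨ (p 0 = 0 ∧ ∀ k, 1 ≤ k → k < n → p k = n - k) := by
  have hbound : ∀ i j, 1 ≤ i → i ≤ j → j ≤ n - 1 → p j + (j - i) ≤ p i := fun i j hi hij hj =>
    add_sub_le_of_succ_lt (fun k hk hkn => hdesc k hk (by omega)) hi hij hj
  have hp0 := hlt 0 (by omega)
  have hp1 := hlt 1 (by omega)
  have hfirst : ∀ k, 1 ≤ k → k < n → p k + (k - 1) ≤ p 1 := fun k hk hkn =>
    hbound 1 k le_rfl hk (by omega)
  have hlast : ∀ k, 1 ≤ k → k < n → p (n - 1) + (n - 1 - k) ≤ p k := fun k hk hkn =>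
    hbound k (n - 1) hk (by omega) le_rfl
  rcases (hne 1 le_rfl (by omega)).lt_or_gt with h1 | h1
  · left
    intro k hk
    have := hlast 1 le_rfl (by omega)
    rcases Nat.eq_zero_or_pos k with rfl | hk1
    · omega
    · have := hfirst k hk1 hk
      have := hlast k hk1 hk
      omega
  · right
    -- `p 0` cannot drop out from below the decreasing values without landing in a gap.
    have habove : ∀ k, 1 ≤ k → k < n → p 0 < p k := by
      intro k hk
      induction k, hk using Nat.le_induction with
      | base => exact fun _ => h1
      | succ k hk ih =>
        intro hkn
        have := hgap k hk hkn
        have := hne (k + 1) (by omega) hkn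
        have := ih (by omega)
        omega
    have := habove (n - 1) (by omega) (by omega)
    have := hfirst (n - 1) (by omega) (by omega)
    refine ⟨by omega, fun k hk hkn => ?_⟩
    have := hfirst k hk hkn
    have := hlast k hk hkn
    omega

theorem eq_revPerm_iff {π : Equiv.Perm (Fin n)} :
    π = Fin.revPerm ↔ ∀ i : Fin n, (π i : ℕ) = n - 1 - i := by
  simp only [Equiv.ext_iff, Fin.ext_iff, Fin.revPerm_apply, Fin.val_rev]
  exact forall_congr' fun i => by omega

theorem eq_neg_iff {π : Equiv.Perm (Fin n)} :
    π = Equiv.neg (Fin n) ↔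
      ∀ i : Fin n, ((i : ℕ) = 0 → (π i : ℕ) = 0) ∧ (1 ≤ (i : ℕ) → (π i : ℕ) = n - i) := by
  simp only [Equiv.ext_iff, Fin.ext_iff, Equiv.neg_apply, Fin.val_neg']
  refine forall_congr' fun i => ?_
  rcases Nat.eq_zero_or_pos (i : ℕ) with h | h
  · simp [h]
  · rw [Nat.mod_eq_of_lt (by omega)]
    omega

theorem avoidsFour_iff_eq_revPerm_or_eq_neg (hn : 2 ≤ n) (π : Equiv.Perm (Fin n)) :
    AvoidsFour ⇑π ↔ π = Fin.revPerm ∨ π = Equiv.neg (Fin n) := by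
  rw [avoidsFour_iff π.injective, eq_revPerm_iff, eq_neg_iff]
  constructor
  · intro h
    set p : ℕ → ℕ := fun k => if hk : k < n then π ⟨k, hk⟩ else 0
    have hp : ∀ k (hk : k < n), p k = π ⟨k, hk⟩ := fun k hk => dif_pos hk
    have h0 : 0 < n := by omega
    refine (eq_of_succ_lt_of_not_mem_gap (p := p) hn (fun k hk => ?_) (fun k hk hkn => ?_)
      (fun k hk hkn => ?_) (fun k hk hkn => ?_)).imp (fun hrev i => ?_) (fun hneg i => ?_)
    · rw [hp k hk]
      exact (π _).isLt
    · rw [hp k hkn, hp 0 h0, ne_eq, ← Fin.ext_iff, π.injective.eq_iff, Fin.mk.injEq]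
      omega
    · rw [hp (k + 1) hkn, hp k (by omega)]
      exact (h ⟨0, h0⟩ ⟨k, by omega⟩ (Fin.mk_lt_mk.2 hk) hkn).1
    · rw [hp (k + 1) hkn, hp k (by omega), hp 0 h0]
      exact (h ⟨0, h0⟩ ⟨k, by omega⟩ (Fin.mk_lt_mk.2 hk) hkn).2
    · simpa [hp i i.isLt] using hrev i i.isLt
    · refine ⟨fun hi => ?_, fun hi => ?_⟩
      · obtain rfl : i = ⟨0, h0⟩ := Fin.ext hi
        simpa [hp 0 h0] using hneg.1
      · simpa [hp i i.isLt] using hneg.2 i hi i.isLt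
  · rintro (h | h) i j hij hj
    · simp only [Fin.lt_def, h] at hij ⊢
      omega
    · rw [Fin.lt_def] at hij
      have hj' := (h j).2 (by omega)
      have hsucc := (h ⟨(j : ℕ) + 1, hj⟩).2 (by simp)
      simp only [Fin.lt_def, hj', hsucc]
      rcases Nat.eq_zero_or_pos (i : ℕ) with hi | hi
      · rw [(h i).1 hi]
        omega
      · rw [(h i).2 hi]
        omega

theorem ncard_avoidsFour (hn : 2 ≤ n) :
    {π : Equiv.Perm (Fin n) | AvoidsFour ⇑π}.ncard = 2 := by
  rw [show {π : Equiv.Perm (Fin n) | AvoidsFour ⇑π} = {Fin.revPerm, Equiv.neg (Fin n)} from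
    Set.ext fun π => avoidsFour_iff_eq_revPerm_or_eq_neg hn π, Set.ncard_pair]
  intro h
  have := (eq_neg_iff.1 h ⟨0, by omega⟩).1 rfl
  simp only [Fin.revPerm_apply, Fin.val_rev] at this
  omega

end DashPattern

theorem stmt_14 (n : ℕ) (hn : 2 ≤ n) :
    (∀ π : Equiv.Perm (Fin n),
      ((¬ (∃ (i j : Fin n) (h : (j : ℕ) + 1 < n), i < j ∧ π i < π j ∧ π j < π ⟨(j : ℕ) + 1, h⟩)) ∧
      (¬ (∃ (i j : Fin n) (h : (j : ℕ) + 1 < n), i < j ∧ π j < π i ∧ π i < π ⟨(j : ℕ) + 1, h⟩)) ∧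
      (¬ (∃ (i j : Fin n) (h : (j : ℕ) + 1 < n), i < j ∧ π ⟨(j : ℕ) + 1, h⟩ < π i ∧ π i < π j)) ∧
      (¬ (∃ (i j : Fin n) (h : (j : ℕ) + 1 < n), i < j ∧ π j < π ⟨(j : ℕ) + 1, h⟩ ∧ π ⟨(j : ℕ) + 1, h⟩ < π i)))
      ↔
      ((∀ i : Fin n, (π i : ℕ) = n - 1 - (i : ℕ)) ∨
      (∀ i : Fin n, ((i : ℕ) = 0 → (π i : ℕ) = 0) ∧ (1 ≤ (i : ℕ) → (π i : ℕ) = n - (i : ℕ))))) ∧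
    Set.ncard {π : Equiv.Perm (Fin n) |
      (¬ (∃ (i j : Fin n) (h : (j : ℕ) + 1 < n), i < j ∧ π i < π j ∧ π j < π ⟨(j : ℕ) + 1, h⟩)) ∧
      (¬ (∃ (i j : Fin n) (h : (j : ℕ) + 1 < n), i < j ∧ π j < π i ∧ π i < π ⟨(j : ℕ) + 1, h⟩)) ∧
      (¬ (∃ (i j : Fin n) (h : (j : ℕ) + 1 < n), i < j ∧ π ⟨(j : ℕ) + 1, h⟩ < π i ∧ π i < π j)) ∧
      (¬ (∃ (i j : Fin n) (h : (j : ℕ) + 1 < n), i < j ∧ π j < π ⟨(j : ℕ) + 1, h⟩ ∧ π ⟨(j : ℕ) + 1, h⟩ < π i))} = 2 :=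
  ⟨fun π => (DashPattern.avoidsFour_iff_eq_revPerm_or_eq_neg hn π).trans
      (or_congr DashPattern.eq_revPerm_iff DashPattern.eq_neg_iff),
    DashPattern.ncard_avoidsFour hn⟩
end

section
/- Let n ≥ 2. A permutation π of {1,...,n} avoids the four patterns 1-23, 2-13, 2-31, and 1-32 if and only if π equals n (n−1) ... 3 2 1 or n (n−1) ... 3 1 2. In particular, there are exactly 2 such permutations of each length n ≥ 2. -/
/-!
For `i < j` with `j + 1 < n`, the four patterns are exactly the orderings of the distinct values
`π i`, `π j`, `π (j + 1)` in which `π i` is not the largest. So `π` avoids them iff `π i` exceeds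
every later value except when `i` is the second-to-last position. Then each `π i` with
`i ≤ n - 3` exceeds exactly the `n - 1 - i` values to its right, so `π i = n - 1 - i`, and the last
two positions carry the values `0` and `1` in either order.
-/

open Finset

namespace PatternAvoidance

variable {n : ℕ}

def AvoidsPatterns (π : Equiv.Perm (Fin n)) : Prop :=
  (¬ (∃ (i j : Fin n) (h : (j : ℕ) + 1 < n), i < j ∧ π i < π j ∧ π j < π ⟨(j : ℕ) + 1, h⟩)) ∧
  (¬ (∃ (i j : Fin n) (h : (j : ℕ) + 1 < n), i < j ∧ π j < π i ∧ π i < π ⟨(j : ℕ) + 1, h⟩)) ∧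
  (¬ (∃ (i j : Fin n) (h : (j : ℕ) + 1 < n), i < j ∧ π ⟨(j : ℕ) + 1, h⟩ < π i ∧ π i < π j)) ∧
  (¬ (∃ (i j : Fin n) (h : (j : ℕ) + 1 < n),
    i < j ∧ π i < π ⟨(j : ℕ) + 1, h⟩ ∧ π ⟨(j : ℕ) + 1, h⟩ < π j))

lemma not_patterns_iff_lt_and_lt {α : Type*} [LinearOrder α] {a b c : α} (hab : a ≠ b)
    (hac : a ≠ c) (hbc : b ≠ c) :
    (¬ (a < b ∧ b < c) ∧ ¬ (b < a ∧ a < c) ∧ ¬ (c < a ∧ a < b) ∧ ¬ (a < c ∧ c < b)) ↔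
      b < a ∧ c < a := by
  rcases hab.lt_or_gt with hab | hab <;> rcases hac.lt_or_gt with hac | hac <;>
    rcases hbc.lt_or_gt with hbc | hbc <;> simp [*, lt_asymm]

lemma avoidsPatterns_iff (π : Equiv.Perm (Fin n)) :
    AvoidsPatterns π ↔
      ∀ (i j : Fin n) (h : (j : ℕ) + 1 < n), i < j → π j < π i ∧ π ⟨(j : ℕ) + 1, h⟩ < π i := by
  have key (i j : Fin n) (h : (j : ℕ) + 1 < n) (hij : i < j) := by
    have := Fin.lt_def.1 hij
    exact not_patterns_iff_lt_and_lt (π.injective.ne hij.ne)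
      (π.injective.ne (Fin.ne_of_val_ne (by simp only; omega)))
      (π.injective.ne (Fin.ne_of_val_ne (by simp only; omega)))
      (c := π ⟨(j : ℕ) + 1, h⟩)
  constructor
  · rintro ⟨h1, h2, h3, h4⟩ i j h hij
    exact (key i j h hij).1 ⟨fun hp => h1 ⟨i, j, h, hij, hp⟩, fun hp => h2 ⟨i, j, h, hij, hp⟩,
      fun hp => h3 ⟨i, j, h, hij, hp⟩, fun hp => h4 ⟨i, j, h, hij, hp⟩⟩
  · intro H
    refine ⟨?_, ?_, ?_, ?_⟩ <;> rintro ⟨i, j, h, hij, hp⟩ <;>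
      have := (key i j h hij).2 (H i j h hij) <;> tauto

lemma card_filter_apply_lt {α : Type*} [Fintype α] (e : α ≃ Fin n) (b : α) :
    #{a | e a < e b} = e b := by
  rw [← Fin.card_Iio (e b)]
  exact card_equiv e (by simp)

def ReversedBeforeLastTwo (π : Equiv.Perm (Fin n)) : Prop :=
  ∀ i : Fin n, (i : ℕ) + 3 ≤ n → (π i : ℕ) = n - 1 - i

namespace ReversedBeforeLastTwo

variable {π : Equiv.Perm (Fin n)}

-- Every value `a ≥ 2` is already taken at position `n - 1 - a`.
lemma val_le_one (hπ : ReversedBeforeLastTwo π) (i : Fin n) (hi : n ≤ (i : ℕ) + 2) :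
    (π i : ℕ) ≤ 1 := by
  by_contra! ha
  have hpos : n - 1 - π i < n := by omega
  have hval : (π ⟨n - 1 - π i, hpos⟩ : ℕ) = π i := by
    rw [hπ _ (by simp only; omega)]; simp only; omega
  have := congrArg Fin.val (π.injective (Fin.ext hval))
  simp only at this
  omega

lemma apply_lt (hπ : ReversedBeforeLastTwo π) {i k : Fin n} (hi : (i : ℕ) + 3 ≤ n)
    (hik : i < k) : π k < π i := by
  rw [Fin.lt_def] at hik ⊢
  by_cases hk : (k : ℕ) + 3 ≤ n
  · rw [hπ i hi, hπ k hk]; omega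
  · have := hπ.val_le_one k (by omega)
    rw [hπ i hi]; omega

end ReversedBeforeLastTwo

lemma forall_lt_iff_reversedBeforeLastTwo (π : Equiv.Perm (Fin n)) :
    (∀ (i j : Fin n) (h : (j : ℕ) + 1 < n), i < j → π j < π i ∧ π ⟨(j : ℕ) + 1, h⟩ < π i) ↔
      ReversedBeforeLastTwo π := by
  constructor
  · intro H i hi
    suffices hlt : ∀ k, π k < π i ↔ i < k by
      rw [← card_filter_apply_lt, ← Fin.card_Ioi]
      congr 1
      ext k
      simp [hlt]
    intro k
    constructor
    · intro hk
      by_contra! hki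
      rcases hki.lt_or_eq with hki | rfl
      · exact lt_asymm hk (H k i (by omega) hki).1
      · exact lt_irrefl _ hk
    · intro hik
      rw [Fin.lt_def] at hik
      by_cases hk : (k : ℕ) + 1 < n
      · exact (H i k hk hik).1
      · have hlast : k = ⟨n - 2 + 1, by omega⟩ := Fin.ext (by simp only; omega)
        rw [hlast]
        exact (H i ⟨n - 2, by omega⟩ (by simp only; omega) (Fin.lt_def.2 (by simp only; omega))).2
  · intro hπ i j h hij
    have hi : (i : ℕ) + 3 ≤ n := by rw [Fin.lt_def] at hij; omega
    exact ⟨hπ.apply_lt hi hij, hπ.apply_lt hi (hij.trans (Fin.lt_def.2 (by simp only; omega)))⟩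

lemma reversedBeforeLastTwo_iff (hn : 2 ≤ n) (π : Equiv.Perm (Fin n)) :
    ReversedBeforeLastTwo π ↔
      ((∀ i : Fin n, (π i : ℕ) = n - 1 - (i : ℕ)) ∨
        (∀ i : Fin n, ((i : ℕ) + 3 ≤ n → (π i : ℕ) = n - 1 - (i : ℕ)) ∧
          ((i : ℕ) = n - 2 → (π i : ℕ) = 0) ∧ ((i : ℕ) = n - 1 → (π i : ℕ) = 1))) := by
  constructor
  · intro hπ
    set a : Fin n := ⟨n - 2, by omega⟩
    set b : Fin n := ⟨n - 1, by omega⟩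
    have ha := hπ.val_le_one a (by simp only [a]; omega)
    have hb := hπ.val_le_one b (by simp only [b]; omega)
    have hab : (π a : ℕ) ≠ π b := fun h => by
      have := congrArg Fin.val (π.injective (Fin.ext h))
      simp only [a, b] at this
      omega
    rcases Nat.le_one_iff_eq_zero_or_eq_one.1 ha with ha0 | ha1
    · right
      intro i
      refine ⟨hπ i, fun hi => ?_, fun hi => ?_⟩
      · rwa [show i = a from Fin.ext hi]
      · rw [show i = b from Fin.ext hi]; omega
    · left
      intro i
      by_cases hi : (i : ℕ) + 3 ≤ n
      · exact hπ i hi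
      · rcases (show i = a ∨ i = b by simp only [a, b, Fin.ext_iff]; omega) with rfl | rfl
        · simp only [a] at ha1 ⊢; omega
        · simp only [b] at hb hab ⊢; omega
  · rintro (h | h) i hi
    · exact h i
    · exact (h i).1 hi

def revSwapLast (hn : 2 ≤ n) : Equiv.Perm (Fin n) :=
  Fin.revPerm.trans (Equiv.swap ⟨0, by omega⟩ ⟨1, by omega⟩)

lemma forall_val_eq_iff_eq_revPerm (π : Equiv.Perm (Fin n)) :
    (∀ i : Fin n, (π i : ℕ) = n - 1 - (i : ℕ)) ↔ π = Fin.revPerm := by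
  simp only [Equiv.ext_iff, Fin.ext_iff, Fin.revPerm_apply, Fin.val_rev]
  refine forall_congr' fun i => ?_
  omega

lemma forall_val_eq_iff_eq_revSwapLast (hn : 2 ≤ n) (π : Equiv.Perm (Fin n)) :
    (∀ i : Fin n, ((i : ℕ) + 3 ≤ n → (π i : ℕ) = n - 1 - (i : ℕ)) ∧
      ((i : ℕ) = n - 2 → (π i : ℕ) = 0) ∧ ((i : ℕ) = n - 1 → (π i : ℕ) = 1)) ↔
      π = revSwapLast hn := by
  simp only [Equiv.ext_iff, Fin.ext_iff, revSwapLast, Equiv.trans_apply, Fin.revPerm_apply,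
    Equiv.swap_apply_def, Fin.val_rev]
  refine forall_congr' fun i => ?_
  split_ifs <;> simp_all <;> omega

lemma revPerm_ne_revSwapLast (hn : 2 ≤ n) : Fin.revPerm ≠ revSwapLast hn := by
  intro h
  have h0 := (forall_val_eq_iff_eq_revPerm (n := n) _).2 rfl ⟨n - 1, by omega⟩
  have h1 := ((forall_val_eq_iff_eq_revSwapLast hn _).2 h ⟨n - 1, by omega⟩).2.2 rfl
  simp only at h0 h1
  omega

end PatternAvoidance

open PatternAvoidance in
theorem stmt_15 (n : ℕ) (hn : 2 ≤ n) :
    (∀ π : Equiv.Perm (Fin n),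
      ((¬ (∃ (i j : Fin n) (h : (j : ℕ) + 1 < n), i < j ∧ π i < π j ∧ π j < π ⟨(j : ℕ) + 1, h⟩)) ∧
      (¬ (∃ (i j : Fin n) (h : (j : ℕ) + 1 < n), i < j ∧ π j < π i ∧ π i < π ⟨(j : ℕ) + 1, h⟩)) ∧
      (¬ (∃ (i j : Fin n) (h : (j : ℕ) + 1 < n), i < j ∧ π ⟨(j : ℕ) + 1, h⟩ < π i ∧ π i < π j)) ∧
      (¬ (∃ (i j : Fin n) (h : (j : ℕ) + 1 < n), i < j ∧ π i < π ⟨(j : ℕ) + 1, h⟩ ∧ π ⟨(j : ℕ) + 1, h⟩ < π j)))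
      ↔
      ((∀ i : Fin n, (π i : ℕ) = n - 1 - (i : ℕ)) ∨
      (∀ i : Fin n, ((i : ℕ) + 3 ≤ n → (π i : ℕ) = n - 1 - (i : ℕ)) ∧ ((i : ℕ) = n - 2 → (π i : ℕ) = 0) ∧ ((i : ℕ) = n - 1 → (π i : ℕ) = 1)))) ∧
    Set.ncard {π : Equiv.Perm (Fin n) |
      (¬ (∃ (i j : Fin n) (h : (j : ℕ) + 1 < n), i < j ∧ π i < π j ∧ π j < π ⟨(j : ℕ) + 1, h⟩)) ∧
      (¬ (∃ (i j : Fin n) (h : (j : ℕ) + 1 < n), i < j ∧ π j < π i ∧ π i < π ⟨(j : ℕ) + 1, h⟩)) ∧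
      (¬ (∃ (i j : Fin n) (h : (j : ℕ) + 1 < n), i < j ∧ π ⟨(j : ℕ) + 1, h⟩ < π i ∧ π i < π j)) ∧
      (¬ (∃ (i j : Fin n) (h : (j : ℕ) + 1 < n), i < j ∧ π i < π ⟨(j : ℕ) + 1, h⟩ ∧ π ⟨(j : ℕ) + 1, h⟩ < π j))} = 2 := by
  have characterization (π : Equiv.Perm (Fin n)) := (avoidsPatterns_iff π).trans
    ((forall_lt_iff_reversedBeforeLastTwo π).trans (reversedBeforeLastTwo_iff hn π))
  refine ⟨characterization, ?_⟩
  have avoiders : {π | AvoidsPatterns π} = {Fin.revPerm, revSwapLast hn} := by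
    ext π
    rw [Set.mem_ofPred_eq, characterization, forall_val_eq_iff_eq_revPerm,
      forall_val_eq_iff_eq_revSwapLast hn]
    rfl
  exact (congrArg Set.ncard avoiders).trans (Set.ncard_pair (revPerm_ne_revSwapLast hn))
end

section
/- Let π be a permutation of {1,...,n} (n ≥ 3). If π avoids the three patterns 1-23, 2-31, and 1-32, then exactly one of the following holds: (π(n) = n and π(n−1) = 1), or (π(1) = n and π(n) = 1), or (π(1) = n and π(n−1) = 1). -/
theorem stmt_18 (n : ℕ) (π : ℕ → ℕ)
    (hπ : Set.BijOn π (Set.Icc 1 n) (Set.Icc 1 n))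
    (hn : 3 ≤ n)
    (h1 : ¬ (∃ i j : ℕ, 1 ≤ i ∧ i < j ∧ j + 1 ≤ n ∧ π i < π j ∧ π j < π (j+1))) (h2 : ¬ (∃ i j : ℕ, 1 ≤ i ∧ i < j ∧ j + 1 ≤ n ∧ π (j+1) < π i ∧ π i < π j)) (h3 : ¬ (∃ i j : ℕ, 1 ≤ i ∧ i < j ∧ j + 1 ≤ n ∧ π i < π (j+1) ∧ π (j+1) < π j)) :
    ((π n = n ∧ π (n-1) = 1) ∨ (π 1 = n ∧ π n = 1) ∨ (π 1 = n ∧ π (n-1) = 1)) ∧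
    ¬ ((π n = n ∧ π (n-1) = 1) ∧ (π 1 = n ∧ π n = 1)) ∧ ¬ ((π n = n ∧ π (n-1) = 1) ∧ (π 1 = n ∧ π (n-1) = 1)) ∧ ¬ ((π 1 = n ∧ π n = 1) ∧ (π 1 = n ∧ π (n-1) = 1)) := by
  have hn1 : 1 ≤ n := by omega
  have hmem : ∀ x, 1 ≤ x → x ≤ n → 1 ≤ π x ∧ π x ≤ n := by
    intro x hx1 hx2
    exact hπ.mapsTo ⟨hx1, hx2⟩
  have hinj : ∀ x y, 1 ≤ x → x ≤ n → 1 ≤ y → y ≤ n → π x = π y → x = y := by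
    intro x y hx1 hx2 hy1 hy2 h
    exact hπ.injOn ⟨hx1, hx2⟩ ⟨hy1, hy2⟩ h
  obtain ⟨k, ⟨hk1, hk2⟩, hkn⟩ := hπ.surjOn (Set.mem_Icc.mpr ⟨hn1, le_refl n⟩)
  obtain ⟨m, ⟨hm1, hm2⟩, hm1v⟩ := hπ.surjOn (Set.mem_Icc.mpr ⟨le_refl 1, hn1⟩)
  -- Fact A: k = 1 ∨ k = n
  have factA : k = 1 ∨ k = n := by
    by_contra hc
    push_neg at hc
    have hk1' : 1 < k := lt_of_le_of_ne hk1 (Ne.symm hc.1)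
    have hk2' : k + 1 ≤ n := by omega
    have hpk1 := hmem (k+1) (by omega) hk2'
    have hne : π (k+1) ≠ n := by
      intro h
      have := hinj (k+1) k (by omega) hk2' hk1 hk2 (h.trans hkn.symm)
      omega
    have hlt : π (k+1) < n := lt_of_le_of_ne hpk1.2 hne
    by_cases hcase : ∃ i, 1 ≤ i ∧ i < k ∧ π (k+1) < π i
    · obtain ⟨i, hi1, hik, hiv⟩ := hcase
      apply h2
      refine ⟨i, k, hi1, hik, hk2', hiv, ?_⟩
      rw [hkn]
      have := hmem i hi1 (by omega)
      have : π i ≠ n := by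
        intro h
        have := hinj i k hi1 (by omega) hk1 hk2 (h.trans hkn.symm)
        omega
      omega
    · push_neg at hcase
      have h1le := hcase 1 (le_refl 1) hk1'
      have h1ne : π 1 ≠ π (k+1) := by
        intro h
        have := hinj 1 (k+1) (le_refl 1) (by omega) (by omega) hk2' h
        omega
      apply h3
      refine ⟨1, k, le_refl 1, hk1', hk2', lt_of_le_of_ne h1le h1ne, ?_⟩
      rw [hkn]; exact hlt
  -- Fact B: m = n - 1 ∨ m = n
  have factB : m = n - 1 ∨ m = n := by
    by_contra hc
    push_neg at hc
    have hm2' : m + 2 ≤ n := by omega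
    have hpm1 := hmem (m+1) (by omega) (by omega)
    have hpm2 := hmem (m+2) (by omega) hm2'
    have hne12 : π (m+1) ≠ π (m+2) := by
      intro h
      have := hinj (m+1) (m+2) (by omega) (by omega) (by omega) hm2' h
      omega
    have hne1 : π (m+1) ≠ 1 := by
      intro h
      have := hinj (m+1) m (by omega) (by omega) hm1 hm2 (h.trans hm1v.symm)
      omega
    have hne2 : π (m+2) ≠ 1 := by
      intro h
      have := hinj (m+2) m (by omega) hm2' hm1 hm2 (h.trans hm1v.symm)
      omega
    rcases lt_or_gt_of_ne hne12 with hlt | hgt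
    · apply h1
      refine ⟨m, m+1, hm1, by omega, by omega, ?_, hlt⟩
      rw [hm1v]; omega
    · apply h3
      refine ⟨m, m+1, hm1, by omega, by omega, ?_, hgt⟩
      rw [hm1v]
      show 1 < π (m+2)
      omega
  -- assemble
  have hexcl1 : ¬ ((π n = n ∧ π (n-1) = 1) ∧ (π 1 = n ∧ π n = 1)) := by
    rintro ⟨⟨ha, _⟩, ⟨_, hb⟩⟩; omega
  have hexcl2 : ¬ ((π n = n ∧ π (n-1) = 1) ∧ (π 1 = n ∧ π (n-1) = 1)) := by
    rintro ⟨⟨ha, _⟩, ⟨hb, _⟩⟩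
    have := hinj n 1 hn1 (le_refl n) (le_refl 1) hn1 (ha.trans hb.symm)
    omega
  have hexcl3 : ¬ ((π 1 = n ∧ π n = 1) ∧ (π 1 = n ∧ π (n-1) = 1)) := by
    rintro ⟨⟨_, ha⟩, ⟨_, hb⟩⟩
    have := hinj n (n-1) hn1 (le_refl n) (by omega) (by omega) (ha.trans hb.symm)
    omega
  refine ⟨?_, hexcl1, hexcl2, hexcl3⟩
  rcases factA with hA | hA
  · -- π 1 = n
    rw [hA] at hkn
    rcases factB with hB | hB
    · rw [hB] at hm1v
      exact Or.inr (Or.inr ⟨hkn, hm1v⟩)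
    · rw [hB] at hm1v
      exact Or.inr (Or.inl ⟨hkn, hm1v⟩)
  · -- π n = n
    rw [hA] at hkn
    rcases factB with hB | hB
    · rw [hB] at hm1v
      exact Or.inl ⟨hkn, hm1v⟩
    · rw [hB] at hm1v
      omega
end
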